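/- arXiv:1605.09560 — 5 statements merged into one kernel-verified Lean document; each statement's English description precedes it below -/
import Mathlib

section
/- If a synchronous solution of the power network under decentralized biased integral control exists (all bus frequencies converge to a common value ω_sync, and each integral controller i ∈ K satisfies k_i·λ̇_i = −ω_i + η_i in steady state), then ω_sync = −η_i for every i ∈ K; hence a synchronous solution can exist only if either K has exactly one element, or all biases η_i are equal, and in either case ω_sync equals minus the common bias. -/
open Filter Topology

lemma deriv_limit_zero (f : ℝ → ℝ) (hf : Differentiable ℝ f) {L c : ℝ}
    (hL : Tendsto f atTop (𝓝 L)) (hc : Tendsto (deriv f) atTop (𝓝 c)) : c = 0 := by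
  have key : ∀ t : ℝ, ∃ ξ ∈ Set.Ioo t (t + 1), deriv f ξ = f (t + 1) - f t := by
    intro t
    obtain ⟨ξ, hξ, hd⟩ := exists_deriv_eq_slope f (by linarith : t < t + 1)
      (hf.continuous.continuousOn) (hf.differentiableOn)
    exact ⟨ξ, hξ, by simpa using hd⟩
  choose g hg hgd using key
  have hgt : Tendsto g atTop atTop :=
    tendsto_atTop_mono (fun t => (hg t).1.le) tendsto_id
  have h1 : Tendsto (fun t => deriv f (g t)) atTop (𝓝 c) := hc.comp hgt
  have h2 : Tendsto (fun t => f (t + 1) - f t) atTop (𝓝 (L - L)) :=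
    (hL.comp (tendsto_atTop_add_const_right _ 1 tendsto_id)).sub hL
  rw [sub_self] at h2
  have : Tendsto (fun t => deriv f (g t)) atTop (𝓝 0) := by
    simpa only [hgd] using h2
  exact tendsto_nhds_unique h1 this

/-- **Absence of synchronous solutions under biased decentralized integral control**
(Proposition 1 of the paper). If every bus frequency `deriv (θ i)` converges to a
common value `ωsync`, and each controller `i ∈ K` obeys the biased integral law
`k i * λ̇ i = -(θ̇ i + η i)` (the paper's sign convention, whose steady state is
`0 = ωsync + η i`) with converging controller state `λ i`, then `ωsync = -η i` for
every `i ∈ K`; hence a synchronous solution can exist only if all biases in `K`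
coincide (in particular whenever `K` has more than one element), and `ωsync`
equals minus the (common) bias. -/
theorem gather_broadcast_stmt0
    {V : Type*} (K : Set V) (k η : V → ℝ) (ωsync : ℝ)
    (θ lam : V → ℝ → ℝ)
    (hk : ∀ i ∈ K, 0 < k i)
    (hθdiff : ∀ i, Differentiable ℝ (θ i))
    (hlamdiff : ∀ i ∈ K, Differentiable ℝ (lam i))
    (hctrl : ∀ i ∈ K, ∀ t : ℝ, k i * deriv (lam i) t = -(deriv (θ i) t + η i))
    (hsync : ∀ i, Tendsto (deriv (θ i)) atTop (𝓝 ωsync))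
    (hconv : ∀ i ∈ K, ∃ L : ℝ, Tendsto (lam i) atTop (𝓝 L)) :
    (∀ i ∈ K, ωsync = -η i) ∧ (∀ i ∈ K, ∀ j ∈ K, η i = η j) := by
  have main : ∀ i ∈ K, ωsync = -η i := by
    intro i hi
    have hki := hk i hi
    obtain ⟨L, hL⟩ := hconv i hi
    have hd : ∀ t, deriv (lam i) t = -(deriv (θ i) t + η i) / k i := by
      intro t
      rw [eq_div_iff hki.ne']
      linarith [hctrl i hi t]
    have hct : Tendsto (deriv (lam i)) atTop (𝓝 (-(ωsync + η i) / k i)) := by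
      exact ((((hsync i).add_const (η i)).neg).div_const _).congr fun t => (hd t).symm
    have h0 := deriv_limit_zero (lam i) (hlamdiff i hi) hL hct
    have : ωsync + η i = 0 := by
      have := (div_eq_zero_iff.mp h0).resolve_right hki.ne'
      linarith
    linarith
  refine ⟨main, fun i hi j hj => ?_⟩
  have := main i hi
  have := main j hj
  linarith
end

section
/- At any equilibrium (θ*, ω*, λ*) of the closed-loop gather-and-broadcast system, the frequency vector satisfies ω* = 0 and λ* is the unique solution of Σ_{i∈V} (P_i + (J_i′)^{-1}(λ*)) = 0; moreover the injections u_i* = (J_i′)^{-1}(λ*) satisfy the KKT conditions of the economic dispatch problem min Σ_i J_i(u_i) subject to Σ_i (P_i + u_i) = 0, hence are optimal. -/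
/-!
At an equilibrium `ω⋆ = 0`, so summing the swing equations over all buses kills the network
flows (`∑ i, ∇U(θ)_i = 0`) and leaves the power balance `∑ i, (P i + g i λ⋆) = 0`. Each `g i`
inverts the monotone map `J i'`, hence is strictly increasing, so the balance pins down `λ⋆`.
All marginal costs `J i'(g i λ⋆)` equal the common multiplier `λ⋆`, which is the KKT condition of
the dispatch problem; adding up the tangent-line inequalities of the convex costs proves optimality.
-/

open Set Finset

lemma Function.LeftInverse.strictMono_of_monotone {α β : Type*} [LinearOrder α] [Preorder β]
    {f : α → β} {g : β → α} (hfg : Function.LeftInverse f g) (hf : Monotone f) :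
    StrictMono g := fun a b hab => lt_of_not_ge fun hba =>
  (hab.trans_le (by simpa only [hfg a, hfg b] using hf hba)).false

lemma Finset.strictMono_sum_apply {ι α M : Type*} [Preorder α] [AddCommMonoid M] [PartialOrder M]
    [IsOrderedCancelAddMonoid M] {s : Finset ι} (hs : s.Nonempty) {F : ι → α → M}
    (hF : ∀ i ∈ s, StrictMono (F i)) : StrictMono fun a => ∑ i ∈ s, F i a :=
  fun _ _ hab => Finset.sum_lt_sum_of_nonempty hs fun i hi => hF i hi hab

lemma ConvexOn.add_deriv_mul_sub_le {S : Set ℝ} {f : ℝ → ℝ} (hf : ConvexOn ℝ S f) {x y : ℝ}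
    (hx : x ∈ S) (hy : y ∈ S) (hfd : DifferentiableAt ℝ f x) :
    f x + deriv f x * (y - x) ≤ f y := by
  rcases lt_trichotomy x y with hxy | rfl | hyx
  · have hslope := hf.deriv_le_slope hx hy hxy hfd
    rw [slope_def_field, le_div_iff₀ (sub_pos.mpr hxy)] at hslope
    linarith
  · simp
  · have hslope := hf.slope_le_deriv hy hx hyx hfd
    rw [slope_def_field, div_le_iff₀ (sub_pos.mpr hyx)] at hslope
    linarith

/-- Sufficiency of the KKT conditions for separable convex minimisation under a sum constraint. -/
lemma sum_le_sum_of_deriv_eq_const {ι : Type*} (s : Finset ι) {J : ι → ℝ → ℝ} {x u : ι → ℝ}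
    {lam : ℝ} (hconv : ∀ i ∈ s, ConvexOn ℝ univ (J i))
    (hdiff : ∀ i ∈ s, DifferentiableAt ℝ (J i) (x i)) (hderiv : ∀ i ∈ s, deriv (J i) (x i) = lam)
    (hsum : ∑ i ∈ s, u i = ∑ i ∈ s, x i) :
    ∑ i ∈ s, J i (x i) ≤ ∑ i ∈ s, J i (u i) :=
  calc ∑ i ∈ s, J i (x i) = ∑ i ∈ s, (J i (x i) + lam * (u i - x i)) := by
        rw [sum_add_distrib, ← mul_sum, sum_sub_distrib, hsum, sub_self, mul_zero, add_zero]
    _ ≤ ∑ i ∈ s, J i (u i) := sum_le_sum fun i hi => hderiv i hi ▸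
        (hconv i hi).add_deriv_mul_sub_le (mem_univ _) (mem_univ _) (hdiff i hi)

theorem gather_broadcast_stmt2_general
    {N : ℕ} (hN : 0 < N)
    (J : Fin N → ℝ → ℝ) (g : Fin N → ℝ → ℝ) (P : Fin N → ℝ)
    (gradU : (Fin N → ℝ) → Fin N → ℝ)
    (D : Fin N → ℝ)
    (hdiff : ∀ i, Differentiable ℝ (J i))
    (hconv : ∀ i, StrictConvexOn ℝ univ (J i))
    (hinv : ∀ i, ∀ y : ℝ, deriv (J i) (g i y) = y)
    (hgrad : ∀ θ : Fin N → ℝ, ∑ i, gradU θ i = 0)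
    -- equilibrium (θ⋆, ω⋆, λ⋆): all time-derivatives vanish in the closed loop
    (θs ωs : Fin N → ℝ) (lams : ℝ)
    (heq1 : ∀ i, ωs i = 0)  -- from θ̇ = ω = 0
    (heq2 : ∀ i, 0 = -(D i * ωs i) - gradU θs i + P i + g i lams) :
    ωs = 0 ∧
    (∑ i, (P i + g i lams)) = 0 ∧
    (∀ μ : ℝ, (∑ i, (P i + g i μ)) = 0 → μ = lams) ∧
    (∀ u : Fin N → ℝ, (∑ i, (P i + u i)) = 0 →
      ∑ i, J i (g i lams) ≤ ∑ i, J i (u i)) := by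
  have hbal : ∑ i, (P i + g i lams) = 0 :=
    calc ∑ i, (P i + g i lams) = ∑ i, gradU θs i := sum_congr rfl fun i _ => by
          have h := heq2 i
          rw [heq1 i, mul_zero] at h
          linarith
      _ = 0 := hgrad θs
  have hg_strictMono : ∀ i, StrictMono (g i) := fun i =>
    Function.LeftInverse.strictMono_of_monotone (hinv i)
      (monotoneOn_univ.mp ((hconv i).convexOn.monotoneOn_deriv fun x _ => hdiff i x))
  have hbal_strictMono : StrictMono fun μ => ∑ i, (P i + g i μ) :=
    strictMono_sum_apply (univ_nonempty_iff.mpr ⟨⟨0, hN⟩⟩) fun i _ _ _ hab =>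
      add_lt_add_right (hg_strictMono i hab) _
  refine ⟨funext heq1, hbal, fun μ hμ => hbal_strictMono.injective (hμ.trans hbal.symm), ?_⟩
  intro u hu
  refine sum_le_sum_of_deriv_eq_const univ (fun i _ => (hconv i).convexOn) (fun i _ => hdiff i _)
    (fun i _ => hinv i lams) ?_
  rw [sum_add_distrib] at hu hbal
  linarith

/-- **Closed-loop equilibria of the gather-and-broadcast controlled power system.**
At any equilibrium `(θ⋆, ω⋆, λ⋆)` of
`θ̇ = ω`, `M ω̇ = -D ω - ∇U(θ) + P + (J')⁻¹(λ)`, `k λ̇ = -cᵀ ω`,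
we have `ω⋆ = 0`, the power balance `∑ i (P i + g i λ⋆) = 0` holds and determines
`λ⋆` uniquely, and the injections `u⋆ i = g i λ⋆` (with `g i = (deriv (J i))⁻¹`)
are optimal for the economic dispatch problem. -/
theorem gather_broadcast_stmt2
    {N : ℕ} (hN : 0 < N)
    (J : Fin N → ℝ → ℝ) (g : Fin N → ℝ → ℝ) (P : Fin N → ℝ)
    (U : (Fin N → ℝ) → ℝ) (gradU : (Fin N → ℝ) → Fin N → ℝ)
    (M D c : Fin N → ℝ) (k : ℝ) (hk : 0 < k)
    (hc : ∑ i, c i = 1) (hcpos : ∀ i, 0 ≤ c i)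
    (hdiff : ∀ i, Differentiable ℝ (J i))
    (hconv : ∀ i, StrictConvexOn ℝ univ (J i))
    (hinv : ∀ i, ∀ y : ℝ, deriv (J i) (g i y) = y)
    (hgrad : ∀ θ : Fin N → ℝ, ∑ i, gradU θ i = 0)
    -- equilibrium (θ⋆, ω⋆, λ⋆): all time-derivatives vanish in the closed loop
    (θs ωs : Fin N → ℝ) (lams : ℝ)
    (heq1 : ∀ i, ωs i = 0)  -- from θ̇ = ω = 0
    (heq2 : ∀ i, 0 = -(D i * ωs i) - gradU θs i + P i + g i lams)
    (heq3 : 0 = -∑ i, c i * ωs i) :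
    ωs = 0 ∧
    (∑ i, (P i + g i lams)) = 0 ∧
    (∀ μ : ℝ, (∑ i, (P i + g i μ)) = 0 → μ = lams) ∧
    (∀ u : Fin N → ℝ, (∑ i, (P i + u i)) = 0 →
      ∑ i, J i (g i lams) ≤ ∑ i, J i (u i)) :=
  gather_broadcast_stmt2_general hN J g P gradU D hdiff hconv hinv hgrad θs ωs lams heq1 heq2
end

section
/- If |θ_i − θ_j| < π/2 for all edges {i,j} ∈ E of a connected graph with positive weights B_{ij} > 0, then the Hessian ∇²U(θ) of U(θ) = Σ_{{i,j}∈E} B_{ij}(1 − cos(θ_i − θ_j)) is a positive semidefinite matrix whose kernel is exactly the span of the all-ones vector. -/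
/-!
On every edge `cos (θ i - θ j) > 0`, so the Hessian is the Laplacian of the graph with positive
edge weights `w i j = B i j * cos (θ i - θ j)`. Its quadratic form is
`½ ∑ w i j (x i - x j)²`, which is nonnegative and vanishes exactly when `x` is constant along
every edge, i.e. constant, by connectedness.
-/

open Finset Matrix Real

namespace SimpleGraph

variable {V α : Type*} {G : SimpleGraph V}

theorem Reachable.eq_of_forall_adj {f : V → α} (hf : ∀ i j, G.Adj i j → f i = f j) {i j : V}
    (h : G.Reachable i j) : f i = f j := by
  obtain ⟨p⟩ := h
  induction p with
  | nil => rfl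
  | cons hadj _ ih => exact (hf _ _ hadj).trans ih

theorem Connected.exists_eq_const_of_forall_adj (hG : G.Connected) {f : V → α}
    (hf : ∀ i j, G.Adj i j → f i = f j) : ∃ a : α, f = fun _ => a := by
  obtain ⟨i₀⟩ := hG.nonempty
  exact ⟨f i₀, funext fun i => ((hG i₀ i).eq_of_forall_adj hf).symm⟩

end SimpleGraph

section WeightedLaplacian

variable {V : Type*} [Fintype V] [DecidableEq V] {w : V → V → ℝ}

def weightedLapMatrix (w : V → V → ℝ) : Matrix V V ℝ :=
  Matrix.of fun i j => if i = j then ∑ k ∈ univ.erase i, w i k else -w i j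

theorem weightedLapMatrix_mulVec_apply (w : V → V → ℝ) (x : V → ℝ) (i : V) :
    (weightedLapMatrix w *ᵥ x) i = ∑ j, w i j * (x i - x j) := by
  rw [mulVec, dotProduct, ← add_sum_erase _ _ (mem_univ i),
    ← add_sum_erase _ _ (mem_univ i)]
  simp only [weightedLapMatrix, of_apply, if_pos, sub_self, mul_zero, zero_add, sum_mul]
  rw [← sum_add_distrib]
  refine sum_congr rfl fun j hj => ?_
  rw [if_neg (ne_of_mem_erase hj).symm]
  ring

theorem weightedLapMatrix_mulVec_const (w : V → V → ℝ) (a : ℝ) :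
    weightedLapMatrix w *ᵥ (fun _ => a) = 0 := by
  ext i
  simp [weightedLapMatrix_mulVec_apply]

theorem isHermitian_weightedLapMatrix (hw : ∀ i j, w i j = w j i) :
    (weightedLapMatrix w).IsHermitian := by
  ext i j
  by_cases hij : i = j
  · subst hij; rfl
  · simp [weightedLapMatrix, hij, Ne.symm hij, hw i j]

/-- Symmetrising `∑ i j, w i j * x i * (x i - x j)` over `i ↔ j` gives the edge-energy form. -/
theorem dotProduct_weightedLapMatrix_mulVec (hw : ∀ i j, w i j = w j i) (x : V → ℝ) :
    x ⬝ᵥ weightedLapMatrix w *ᵥ x = (∑ i, ∑ j, w i j * (x i - x j) ^ 2) / 2 := by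
  have hswap : ∑ i, ∑ j, w i j * (x i * (x i - x j)) = ∑ i, ∑ j, w i j * (x j * (x j - x i)) := by
    rw [sum_comm]
    simp only [hw]
  have hsq : ∑ i, ∑ j, w i j * (x i - x j) ^ 2 =
      ∑ i, ∑ j, w i j * (x i * (x i - x j)) + ∑ i, ∑ j, w i j * (x j * (x j - x i)) := by
    rw [← sum_add_distrib]
    refine sum_congr rfl fun i _ => ?_
    rw [← sum_add_distrib]
    exact sum_congr rfl fun j _ => by ring
  have hlhs : x ⬝ᵥ weightedLapMatrix w *ᵥ x = ∑ i, ∑ j, w i j * (x i * (x i - x j)) := by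
    simp only [dotProduct, weightedLapMatrix_mulVec_apply, mul_sum]
    exact sum_congr rfl fun i _ => sum_congr rfl fun j _ => by ring
  rw [hlhs, hsq, ← hswap]
  ring

theorem posSemidef_weightedLapMatrix (hw : ∀ i j, w i j = w j i) (hnn : ∀ i j, 0 ≤ w i j) :
    (weightedLapMatrix w).PosSemidef := by
  refine .of_dotProduct_mulVec_nonneg (isHermitian_weightedLapMatrix hw) fun x => ?_
  rw [star_trivial, dotProduct_weightedLapMatrix_mulVec hw]
  exact div_nonneg (sum_nonneg fun i _ => sum_nonneg fun j _ =>
    mul_nonneg (hnn i j) (sq_nonneg _)) zero_le_two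

theorem weightedLapMatrix_mulVec_eq_zero_iff (G : SimpleGraph V) (hG : G.Connected)
    (hw : ∀ i j, w i j = w j i) (hnn : ∀ i j, 0 ≤ w i j) (hpos : ∀ i j, G.Adj i j → 0 < w i j)
    (x : V → ℝ) : weightedLapMatrix w *ᵥ x = 0 ↔ ∃ a : ℝ, x = fun _ => a := by
  refine ⟨fun hx => hG.exists_eq_const_of_forall_adj fun i j hij => ?_, ?_⟩
  · have hterm : ∀ i j, 0 ≤ w i j * (x i - x j) ^ 2 := fun i j =>
      mul_nonneg (hnn i j) (sq_nonneg _)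
    rw [← (posSemidef_weightedLapMatrix hw hnn).dotProduct_mulVec_zero_iff, star_trivial,
      dotProduct_weightedLapMatrix_mulVec hw, div_eq_zero_iff, or_iff_left two_ne_zero,
      sum_eq_zero_iff_of_nonneg fun i _ => sum_nonneg fun j _ => hterm i j] at hx
    have hij0 := (sum_eq_zero_iff_of_nonneg fun j _ => hterm i j).1 (hx i (mem_univ i)) j
      (mem_univ j)
    rw [mul_eq_zero, or_iff_right (hpos i j hij).ne', sq_eq_zero_iff, sub_eq_zero] at hij0
    exact hij0
  · rintro ⟨a, rfl⟩
    exact weightedLapMatrix_mulVec_const w a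

end WeightedLaplacian

theorem gather_broadcast_stmt5_general
    {N : ℕ} (G : SimpleGraph (Fin N))
    (hconn : G.Connected)
    (B : Fin N → Fin N → ℝ)
    (hsymm : ∀ i j, B i j = B j i)
    (hpos : ∀ i j, G.Adj i j → 0 < B i j)
    (hzero : ∀ i j, ¬ G.Adj i j → B i j = 0)
    (θ : Fin N → ℝ)
    (hθ : ∀ i j, G.Adj i j → |θ i - θ j| < π / 2)
    (L : Matrix (Fin N) (Fin N) ℝ)
    (hL : ∀ i j, L i j =
      if i = j then ∑ k ∈ Finset.univ.erase i, B i k * Real.cos (θ i - θ k)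
      else -(B i j * Real.cos (θ i - θ j))) :
    L.PosSemidef ∧
    (∀ x : Fin N → ℝ, L.mulVec x = 0 ↔ ∃ a : ℝ, x = fun _ => a) := by
  set w : Fin N → Fin N → ℝ := fun i j => B i j * cos (θ i - θ j)
  have hL_eq : L = weightedLapMatrix w := Matrix.ext fun i j => hL i j
  have hw : ∀ i j, w i j = w j i := fun i j => by
    simp only [w, hsymm i j, ← cos_neg (θ i - θ j), neg_sub]
  have hwpos : ∀ i j, G.Adj i j → 0 < w i j := fun i j hij =>
    mul_pos (hpos i j hij) (cos_pos_of_mem_Ioo (abs_lt.1 (hθ i j hij)))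
  have hwnn : ∀ i j, 0 ≤ w i j := fun i j => by
    by_cases hij : G.Adj i j
    · exact (hwpos i j hij).le
    · simp [w, hzero i j hij]
  subst hL_eq
  exact ⟨posSemidef_weightedLapMatrix hw hwnn,
    weightedLapMatrix_mulVec_eq_zero_iff G hconn hw hwnn hwpos⟩

/-- **The Hessian of the potential is a PSD Laplacian with kernel `span 𝟙`.**
If `|θ i - θ j| < π/2` on each edge of a connected graph with positive edge
weights `B i j`, then the Hessian `∇²U(θ)` — with entries
`-B i j cos (θ i - θ j)` off the diagonal and `∑_{k≠i} B i k cos (θ i - θ k)`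
on the diagonal — is positive semidefinite and its kernel is exactly the span
of the all-ones vector. -/
theorem gather_broadcast_stmt5
    {N : ℕ} (G : SimpleGraph (Fin N)) [DecidableRel G.Adj]
    (hconn : G.Connected)
    (B : Fin N → Fin N → ℝ)
    (hsymm : ∀ i j, B i j = B j i)
    (hpos : ∀ i j, G.Adj i j → 0 < B i j)
    (hzero : ∀ i j, ¬ G.Adj i j → B i j = 0)
    (θ : Fin N → ℝ)
    (hθ : ∀ i j, G.Adj i j → |θ i - θ j| < π / 2)
    (L : Matrix (Fin N) (Fin N) ℝ)
    (hL : ∀ i j, L i j =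
      if i = j then ∑ k ∈ Finset.univ.erase i, B i k * Real.cos (θ i - θ k)
      else -(B i j * Real.cos (θ i - θ j))) :
    L.PosSemidef ∧
    (∀ x : Fin N → ℝ, L.mulVec x = 0 ↔ ∃ a : ℝ, x = fun _ => a) :=
  gather_broadcast_stmt5_general G hconn B hsymm hpos hzero θ hθ L hL
end

section
/- Along any solution of the closed-loop system θ̇ = ω, M ω̇ = −D ω − (∇U(θ) − ∇U(θ*)) + c·((J′)^{-1}(λ) − (J′)^{-1}(λ*)), k λ̇ = −c^⊤ ω, the Hamiltonian H(θ, ω, λ) = U(θ) − U(θ*) − ∇U(θ*)^⊤(θ − θ*) + ½ ω^⊤ M ω + k(I(λ) − I(λ*) − I′(λ*)(λ − λ*)) satisfies dH/dt = −ω^⊤ D ω ≤ 0. -/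
section Energy

variable {ι : Type*} [Fintype ι] {t : ℝ}

lemma hasDerivAt_bregman_comp {I g f : ℝ → ℝ} {f' : ℝ} (a : ℝ)
    (hI : ∀ x, HasDerivAt I (g x) x) (hf : HasDerivAt f f' t) :
    HasDerivAt (fun s => I (f s) - I a - g a * (f s - a)) ((g (f t) - g a) * f') t := by
  have h := (((hI (f t)).comp t hf).sub_const (I a)).sub ((hf.sub_const a).const_mul (g a))
  exact h.congr_deriv (by ring)

lemma hasDerivAt_linearized_potential {U : (ι → ℝ) → ℝ} {gradU : (ι → ℝ) → ι → ℝ}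
    {θ ω : ℝ → ι → ℝ} (θs : ι → ℝ)
    (hθ : ∀ i, HasDerivAt (fun s => θ s i) (ω t i) t)
    (hU : HasDerivAt (fun s => U (θ s)) (∑ i, gradU (θ t) i * ω t i) t) :
    HasDerivAt (fun s => U (θ s) - U θs - ∑ i, gradU θs i * (θ s i - θs i))
      (∑ i, (gradU (θ t) i - gradU θs i) * ω t i) t := by
  have hlin : HasDerivAt (fun s => ∑ i, gradU θs i * (θ s i - θs i))
      (∑ i, gradU θs i * ω t i) t :=
    HasDerivAt.fun_sum fun i _ => ((hθ i).sub_const _).const_mul _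
  refine ((hU.sub_const (U θs)).sub hlin).congr_deriv ?_
  simp only [sub_mul, Finset.sum_sub_distrib]

lemma hasDerivAt_kinetic_energy (M : ι → ℝ) {ω ω' : ℝ → ι → ℝ}
    (hω : ∀ i, HasDerivAt (fun s => ω s i) (ω' t i) t) :
    HasDerivAt (fun s => (1 / 2) * ∑ i, M i * ω s i ^ 2)
      (∑ i, ω t i * (M i * ω' t i)) t := by
  have h : HasDerivAt (fun s => ∑ i, M i * ω s i ^ 2) (∑ i, M i * (2 * ω t i ^ 1 * ω' t i)) t :=
    HasDerivAt.fun_sum fun i _ => ((hω i).pow 2).const_mul _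
  refine (h.const_mul (1 / 2)).congr_deriv ?_
  rw [Finset.mul_sum]
  exact Finset.sum_congr rfl fun i _ => by ring

end Energy

theorem gather_broadcast_stmt9_general
    {N : ℕ}
    (U : (Fin N → ℝ) → ℝ) (gradU : (Fin N → ℝ) → Fin N → ℝ)
    (g I : ℝ → ℝ) (hI : ∀ x : ℝ, HasDerivAt I (g x) x)
    (M D c : Fin N → ℝ) (hD : ∀ i, 0 ≤ D i)
    (k : ℝ) (hk : 0 < k)
    (θs : Fin N → ℝ) (lams : ℝ)
    -- a solution (θ, ω, λ) of the closed loop, with ω' the acceleration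
    (θ ω ω' : ℝ → Fin N → ℝ) (lam : ℝ → ℝ)
    (hθ : ∀ i, ∀ t : ℝ, HasDerivAt (fun s => θ s i) (ω t i) t)
    (hω : ∀ i, ∀ t : ℝ, HasDerivAt (fun s => ω s i) (ω' t i) t)
    (hMω : ∀ i, ∀ t : ℝ, M i * ω' t i =
      -(D i * ω t i) - (gradU (θ t) i - gradU θs i) + c i * (g (lam t) - g lams))
    (hlam : ∀ t : ℝ, HasDerivAt lam (-(∑ i, c i * ω t i) / k) t)
    -- chain rule for the potential along the trajectory
    (hUchain : ∀ t : ℝ, HasDerivAt (fun s => U (θ s)) (∑ i, gradU (θ t) i * ω t i) t)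
    (H : ℝ → ℝ)
    (hH : ∀ t : ℝ, H t =
      U (θ t) - U θs - (∑ i, gradU θs i * (θ t i - θs i))
      + (1 / 2) * ∑ i, M i * (ω t i) ^ 2
      + k * (I (lam t) - I lams - g lams * (lam t - lams))) :
    ∀ t : ℝ, HasDerivAt H (-(∑ i, D i * (ω t i) ^ 2)) t ∧
      -(∑ i, D i * (ω t i) ^ 2) ≤ 0 := by
  intro t
  refine ⟨?_, neg_nonpos.2 <| Finset.sum_nonneg fun i _ => mul_nonneg (hD i) (sq_nonneg _)⟩
  have hderiv := ((hasDerivAt_linearized_potential θs (hθ · t) (hUchain t)).add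
    (hasDerivAt_kinetic_energy M (hω · t))).add
    ((hasDerivAt_bregman_comp lams hI (hlam t)).const_mul k)
  rw [show H = _ from funext hH]
  refine hderiv.congr_deriv ?_
  have hcoupling : k * ((g (lam t) - g lams) * (-(∑ i, c i * ω t i) / k))
      = -∑ i, (g (lam t) - g lams) * (c i * ω t i) := by
    rw [← Finset.mul_sum]; field_simp
  rw [hcoupling, ← Finset.sum_add_distrib, ← Finset.sum_neg_distrib, ← Finset.sum_add_distrib,
    ← Finset.sum_neg_distrib]
  -- the coupling terms through ∇U and through c cancel, leaving only the damping
  exact Finset.sum_congr rfl fun i _ => by rw [hMω]; ring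

/-- **Dissipation identity for the Hamiltonian.**
Along any solution of
`θ̇ = ω`, `M ω̇ = -D ω - (∇U(θ) - ∇U(θ⋆)) + c ((J')⁻¹(λ) - (J')⁻¹(λ⋆))`,
`k λ̇ = -cᵀ ω`, the Hamiltonian
`H = U(θ) - U(θ⋆) - ∇U(θ⋆)ᵀ(θ - θ⋆) + ½ ωᵀ M ω + k (I(λ) - I(λ⋆) - I'(λ⋆)(λ - λ⋆))`
satisfies `Ḣ = -ωᵀ D ω ≤ 0`.  Here `g = (J')⁻¹ = I'`. -/
theorem gather_broadcast_stmt9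
    {N : ℕ}
    (U : (Fin N → ℝ) → ℝ) (gradU : (Fin N → ℝ) → Fin N → ℝ)
    (g I : ℝ → ℝ) (hI : ∀ x : ℝ, HasDerivAt I (g x) x)
    (M D c : Fin N → ℝ) (hM : ∀ i, 0 ≤ M i) (hD : ∀ i, 0 ≤ D i)
    (k : ℝ) (hk : 0 < k)
    (θs : Fin N → ℝ) (lams : ℝ)
    -- a solution (θ, ω, λ) of the closed loop, with ω' the acceleration
    (θ ω ω' : ℝ → Fin N → ℝ) (lam : ℝ → ℝ)
    (hθ : ∀ i, ∀ t : ℝ, HasDerivAt (fun s => θ s i) (ω t i) t)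
    (hω : ∀ i, ∀ t : ℝ, HasDerivAt (fun s => ω s i) (ω' t i) t)
    (hMω : ∀ i, ∀ t : ℝ, M i * ω' t i =
      -(D i * ω t i) - (gradU (θ t) i - gradU θs i) + c i * (g (lam t) - g lams))
    (hlam : ∀ t : ℝ, HasDerivAt lam (-(∑ i, c i * ω t i) / k) t)
    -- chain rule for the potential along the trajectory
    (hUchain : ∀ t : ℝ, HasDerivAt (fun s => U (θ s)) (∑ i, gradU (θ t) i * ω t i) t)
    (H : ℝ → ℝ)
    (hH : ∀ t : ℝ, H t =
      U (θ t) - U θs - (∑ i, gradU θs i * (θ t i - θs i))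
      + (1 / 2) * ∑ i, M i * (ω t i) ^ 2
      + k * (I (lam t) - I lams - g lams * (lam t - lams))) :
    ∀ t : ℝ, HasDerivAt H (-(∑ i, D i * (ω t i) ^ 2)) t ∧
      -(∑ i, D i * (ω t i) ^ 2) ≤ 0 :=
  gather_broadcast_stmt9_general U gradU g I hI M D c hD k hk θs lams θ ω ω' lam hθ hω hMω hlam
    hUchain H hH
end

section
/- Suppose along trajectories of the closed loop with identical scaled controllers, ω ≡ 0 on an invariant set and λ satisfies k λ̇ = −c^⊤ ω together with ∇U(θ) − ∇U(θ*) = c ((J′)^{-1}(λ) − (J′)^{-1}(λ*)). Then on this invariant set λ ≡ λ*, λ̇ = 0, and θ is stationary; hence the largest invariant set where Ḣ = 0 consists only of equilibria with ω = 0 and λ = λ*. -/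
/-- **LaSalle invariant set consists only of equilibria.**
Suppose that along a trajectory of the closed loop with identically scaled
controllers we have `ω ≡ 0`, `k λ̇ = -cᵀω`, and the steady-state relation
`∇U(θ) - ∇U(θ⋆) = c (g(λ) - g(λ⋆))` holds at all times, where `𝟙ᵀ∇U ≡ 0`,
`c` has positive entries summing to `1`, and `g = (J')⁻¹` is strictly
increasing. Then along the trajectory `λ ≡ λ⋆`, `λ̇ = 0`, and `θ` is
stationary; i.e. the invariant set where `Ḣ = 0` consists only of equilibria
with `ω = 0` and `λ = λ⋆`. -/
theorem gather_broadcast_stmt19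
    {N : ℕ}
    (U : (Fin N → ℝ) → ℝ) (gradU : (Fin N → ℝ) → Fin N → ℝ)
    (hgrad : ∀ θ : Fin N → ℝ, ∑ i, gradU θ i = 0)
    (c : Fin N → ℝ) (hcpos : ∀ i, 0 < c i) (hc : ∑ i, c i = 1)
    (g : ℝ → ℝ) (hg : StrictMono g)
    (k : ℝ) (hk : 0 < k)
    (θs : Fin N → ℝ) (lams : ℝ)
    (θ ω : ℝ → Fin N → ℝ) (lam : ℝ → ℝ)
    (hθ : ∀ i, ∀ t : ℝ, HasDerivAt (fun s => θ s i) (ω t i) t)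
    (hω0 : ∀ t : ℝ, ∀ i, ω t i = 0)
    (hlam : ∀ t : ℝ, HasDerivAt lam (-(∑ i, c i * ω t i) / k) t)
    (hss : ∀ t : ℝ, ∀ i,
      gradU (θ t) i - gradU θs i = c i * (g (lam t) - g lams)) :
    (∀ t : ℝ, lam t = lams) ∧
    (∀ t : ℝ, HasDerivAt lam 0 t) ∧
    (∀ t : ℝ, θ t = θ 0) := by
  have hlameq : ∀ t : ℝ, lam t = lams := by
    intro t
    have hsum : (0:ℝ) = (∑ i, c i) * (g (lam t) - g lams) := by
      have h1 : ∑ i, (gradU (θ t) i - gradU θs i)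
          = ∑ i, c i * (g (lam t) - g lams) :=
        Finset.sum_congr rfl (fun i _ => hss t i)
      rw [Finset.sum_sub_distrib, hgrad, hgrad] at h1
      simpa [Finset.sum_mul] using h1
    rw [hc, one_mul] at hsum
    have : g (lam t) = g lams := by linarith
    exact hg.injective this
  refine ⟨hlameq, fun t => ?_, fun t => ?_⟩
  · have := hlam t
    simpa [hω0 t] using this
  · funext i
    have hconst : ∀ s : ℝ, HasDerivAt (fun u => θ u i) 0 s := by
      intro s; simpa [hω0 s i] using hθ i s
    have : (fun s => θ s i) t = (fun s => θ s i) 0 :=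
      is_const_of_deriv_eq_zero (fun s => (hconst s).differentiableAt)
        (fun s => (hconst s).deriv) t 0
    exact this
end
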